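/- Let N=(G,r,p,q,I) be a network in which G is a finite connected simple graph, and let f be a flow of intensity I from p to q. Then f satisfies Kirchhoff's cycle law if and only if W(f) ≤ W(g) for every flow g of intensity I from p to q. -/

import Mathlib

open scoped ENNReal Classical

/-- `f` is a flow of intensity `I` from `p` to `q` in the graph `G`:
it is antisymmetric, vanishes on non-adjacent pairs, and satisfies
Kirchhoff's node law at every vertex (the family of values on edges leaving a
vertex is summable, with sum `I` at `p`, `-I` at `q` and `0` elsewhere). -/
def IsFlow {V : Type} (G : SimpleGraph V) (p q : V) (I : ℝ) (f : V → V → ℝ) : Prop :=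
  (∀ x y, f x y = - f y x) ∧
  (∀ x y, ¬ G.Adj x y → f x y = 0) ∧
  ∀ x : V, HasSum (fun y : G.neighborSet x => f x y)
    (if x = p then I else if x = q then -I else 0)

/-- The energy `W(f) = ∑_{xy ∈ E} f(x,y)² r(xy)`; each edge of `G` corresponds to
exactly two ordered adjacent pairs contributing the same amount, whence the
division by 2. Valued in `ℝ≥0∞`. -/
noncomputable def energy {V : Type} (G : SimpleGraph V) (r : Sym2 V → ℝ)
    (f : V → V → ℝ) : ℝ≥0∞ :=
  (∑' e : {e : V × V // G.Adj e.1 e.2},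
      ENNReal.ofReal (f e.1.1 e.1.2 ^ 2 * r s(e.1.1, e.1.2))) / 2

/-- Kirchhoff's cycle law: around every (finite) cycle the potential
differences `f(x,y) · r(xy)` sum to zero. -/
def CycleLaw {V : Type} (G : SimpleGraph V) (r : Sym2 V → ℝ) (f : V → V → ℝ) : Prop :=
  ∀ (v : V) (c : G.Walk v v), c.IsCycle →
    (c.darts.map (fun d => f d.toProd.1 d.toProd.2 * r d.edge)).sum = 0

/-- `f` is cut-respecting: for every set `X` of vertices containing both `p` and `q`
such that only finitely many edges join `X` to its complement, the net flow
across the cut is zero. -/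
def CutRespecting {V : Type} (G : SimpleGraph V) (p q : V) (f : V → V → ℝ) : Prop :=
  ∀ X : Set V, p ∈ X → q ∈ X →
    ∀ hX : {e : V × V | e.1 ∈ X ∧ e.2 ∉ X ∧ G.Adj e.1 e.2}.Finite,
      ∑ e ∈ hX.toFinset, f e.1 e.2 = 0


/-!
Flows of intensity `I` form the affine space `f + C`, where `C` is the space of circulations,
and twice the energy is the quadratic form of `⟨f, g⟩ = ∑ f(x,y) g(x,y) r(xy)`; hence `f`
minimises the energy iff `⟨f, k⟩ = 0` for every circulation `k`. Under the cycle law the voltage around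
every closed walk vanishes (reduce the walk to a path, peeling off cycles), so `f · r` is the
gradient of a potential, and summation by parts makes a gradient orthogonal to every
circulation. Conversely, a cycle `c` carries a circulation whose pairing with `f` is twice the
voltage around `c`.
-/

open SimpleGraph

namespace SimpleGraph.Walk

variable {V : Type} {G : SimpleGraph V}

section Voltage

variable (r : Sym2 V → ℝ) (f : V → V → ℝ)

def voltage {u v : V} (w : G.Walk u v) : ℝ :=
  (w.darts.map fun d => f d.fst d.snd * r d.edge).sum

@[simp]
theorem voltage_nil {u : V} : (nil : G.Walk u u).voltage r f = 0 := rfl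

@[simp]
theorem voltage_cons {u v w : V} (h : G.Adj u v) (p : G.Walk v w) :
    (cons h p).voltage r f = f u v * r s(u, v) + p.voltage r f := rfl

@[simp]
theorem voltage_append {u v w : V} (p : G.Walk u v) (q : G.Walk v w) :
    (p.append q).voltage r f = p.voltage r f + q.voltage r f := by
  simp [voltage, darts_append]

@[simp]
theorem voltage_copy {u v u' v' : V} (p : G.Walk u v) (hu : u = u') (hv : v = v') :
    (p.copy hu hv).voltage r f = p.voltage r f := by
  subst hu hv; rfl

variable {r f}

theorem voltage_reverse (hf : ∀ x y, f x y = -f y x) {u v : V} (p : G.Walk u v) :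
    p.reverse.voltage r f = -p.voltage r f := by
  induction p with
  | nil => simp
  | cons h p ih =>
    rename_i a b _
    simp [reverse_cons, ih, hf a b, Sym2.eq_swap]

variable (hf : ∀ x y, f x y = -f y x) (hcyc : CycleLaw G r f)
include hf hcyc

/-- A path closed up by one edge is a cycle, unless it is that edge traversed back. -/
theorem voltage_cons_eq_zero_of_isPath {u v : V} (h : G.Adj u v) {p : G.Walk v u}
    (hp : p.IsPath) : (cons h p).voltage r f = 0 := by
  by_cases huv : s(u, v) ∈ p.edges
  · cases p with
    | nil => exact absurd h (G.loopless.irrefl u)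
    | @cons _ w _ h' p' =>
      have hv : v ∉ p'.support := ((cons_isPath_iff h' p').1 hp).2
      rcases List.mem_cons.1 (edges_cons h' p' ▸ huv) with he | he
      · obtain rfl : w = u := by
          rcases Sym2.eq_iff.1 he with ⟨rfl, -⟩ | ⟨rfl, -⟩
          · exact absurd h (G.loopless.irrefl _)
          · rfl
        obtain rfl := eq_nil_iff_nil.2 (isPath_iff_nil.1 ((cons_isPath_iff h' p').1 hp).1)
        simp [hf w v, Sym2.eq_swap]
      · exact absurd (p'.snd_mem_support_of_mem_edges he) hv
  · exact hcyc u _ ((cons_isCycle_iff p h).2 ⟨hp, huv⟩)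

theorem voltage_bypass {u v : V} (p : G.Walk u v) : p.bypass.voltage r f = p.voltage r f := by
  induction p with
  | nil => rfl
  | cons h p ih =>
    rename_i u _ _
    rw [bypass]
    split_ifs with hu
    · have hloop := voltage_cons_eq_zero_of_isPath hf hcyc h (p.bypass_isPath.takeUntil hu)
      have hsplit := congrArg (voltage r f) (p.bypass.take_spec hu)
      rw [voltage_cons] at hloop
      rw [voltage_append] at hsplit
      rw [voltage_cons, ← ih, ← hsplit]
      linarith
    · rw [voltage_cons, voltage_cons, ih]

theorem voltage_eq_zero_of_closed {v : V} (c : G.Walk v v) : c.voltage r f = 0 := by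
  rw [← voltage_bypass hf hcyc, eq_nil_iff_nil.2 (isPath_iff_nil.1 c.bypass_isPath), voltage_nil]

end Voltage

noncomputable def netDartCount {u v : V} (w : G.Walk u v) (x y : V) : ℝ :=
  (w.darts.map fun d =>
    (if d.toProd = (x, y) then 1 else 0) - if d.toProd = (y, x) then 1 else 0).sum

@[simp]
theorem netDartCount_nil {u : V} : (nil : G.Walk u u).netDartCount = 0 := rfl

@[simp]
theorem netDartCount_cons {u v w : V} (h : G.Adj u v) (p : G.Walk v w) (x y : V) :
    (cons h p).netDartCount x y =
      (if (u, v) = (x, y) then 1 else 0) - (if (u, v) = (y, x) then 1 else 0) +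
        p.netDartCount x y := rfl

theorem netDartCount_antisymm {u v : V} (w : G.Walk u v) (x y : V) :
    w.netDartCount x y = -w.netDartCount y x := by
  induction w with
  | nil => simp
  | cons h p ih => rw [netDartCount_cons, netDartCount_cons, ih]; ring

theorem netDartCount_eq_zero_of_not_adj {u v : V} (w : G.Walk u v) {x y : V}
    (hxy : ¬G.Adj x y) : w.netDartCount x y = 0 := by
  induction w with
  | nil => rfl
  | cons h p ih =>
    rename_i a b _
    have hfwd : ¬(a, b) = (x, y) := fun he => by
      obtain ⟨rfl, rfl⟩ := Prod.mk.inj he; exact hxy h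
    have hbwd : ¬(a, b) = (y, x) := fun he => by
      obtain ⟨rfl, rfl⟩ := Prod.mk.inj he; exact hxy h.symm
    rw [netDartCount_cons, if_neg hfwd, if_neg hbwd, ih]; ring

theorem sum_netDartCount [Fintype V] {u v : V} (w : G.Walk u v) (x : V) :
    ∑ y, w.netDartCount x y = (if x = u then 1 else 0) - (if x = v then 1 else 0) := by
  induction w with
  | nil => simp
  | cons h p ih =>
    simp only [netDartCount_cons, Finset.sum_add_distrib, Finset.sum_sub_distrib, ih,
      Prod.mk.injEq, ite_and]
    simp [eq_comm]

end SimpleGraph.Walk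

theorem CycleLaw.exists_potential {V : Type} {G : SimpleGraph V} {r : Sym2 V → ℝ}
    {f : V → V → ℝ} (hcyc : CycleLaw G r f) (hf : ∀ x y, f x y = -f y x) :
    ∃ φ : V → ℝ, ∀ x y, G.Adj x y → f x y * r s(x, y) = φ y - φ x := by
  let base : V → V := fun x => (G.connectedComponentMk x).out
  have walk : ∀ x, G.Walk (base x) x := fun x =>
    (ConnectedComponent.exact (Quot.out_eq (G.connectedComponentMk x))).some
  refine ⟨fun x => (walk x).voltage r f, fun x y hxy => ?_⟩
  have hbase : base x = base y := by
    simp only [base, ConnectedComponent.connectedComponentMk_eq_of_adj hxy]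
  have hloop := Walk.voltage_eq_zero_of_closed hf hcyc
    (((walk x).append (.cons hxy .nil)).append ((walk y).copy hbase.symm rfl).reverse)
  simp only [Walk.voltage_append, Walk.voltage_reverse hf, Walk.voltage_copy, Walk.voltage_cons,
    Walk.voltage_nil] at hloop
  linarith

section FiniteNetwork

variable {V : Type} [Fintype V] {G : SimpleGraph V} {p q : V} {I : ℝ} {f g k : V → V → ℝ}

theorem isFlow_iff_sum_eq :
    IsFlow G p q I f ↔ (∀ x y, f x y = -f y x) ∧ (∀ x y, ¬G.Adj x y → f x y = 0) ∧
      ∀ x, ∑ y, f x y = if x = p then I else if x = q then -I else 0 := by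
  refine and_congr_right fun _ => and_congr_right fun hf₀ => forall_congr' fun x => ?_
  have hsupp : Function.support (f x) ⊆ G.neighborSet x := fun y hy =>
    not_not.1 fun hxy => hy (hf₀ x y hxy)
  refine (hasSum_subtype_iff_of_support_subset hsupp).trans ⟨fun h => ?_, fun h => ?_⟩
  · exact (hasSum_fintype _).unique h
  · exact h ▸ hasSum_fintype _

structure IsCirculation (G : SimpleGraph V) (k : V → V → ℝ) : Prop where
  antisymm : ∀ x y, k x y = -k y x
  eq_zero_of_not_adj : ∀ x y, ¬G.Adj x y → k x y = 0
  sum_eq_zero : ∀ x, ∑ y, k x y = 0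

theorem IsFlow.sub_isCirculation (hf : IsFlow G p q I f) (hg : IsFlow G p q I g) :
    IsCirculation G (g - f) := by
  obtain ⟨hf₁, hf₂, hf₃⟩ := isFlow_iff_sum_eq.1 hf
  obtain ⟨hg₁, hg₂, hg₃⟩ := isFlow_iff_sum_eq.1 hg
  refine ⟨fun x y => ?_, fun x y hxy => ?_, fun x => ?_⟩
  · simp only [Pi.sub_apply, hf₁ x y, hg₁ x y]; ring
  · simp [hf₂ x y hxy, hg₂ x y hxy]
  · simp [Finset.sum_sub_distrib, hf₃, hg₃]

theorem IsFlow.add_smul (hf : IsFlow G p q I f) (hk : IsCirculation G k) (t : ℝ) :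
    IsFlow G p q I (f + t • k) := by
  obtain ⟨hf₁, hf₂, hf₃⟩ := isFlow_iff_sum_eq.1 hf
  refine isFlow_iff_sum_eq.2 ⟨fun x y => ?_, fun x y hxy => ?_, fun x => ?_⟩
  · simp only [Pi.add_apply, Pi.smul_apply, smul_eq_mul, hf₁ x y, hk.antisymm x y]; ring
  · simp [hf₂ x y hxy, hk.eq_zero_of_not_adj x y hxy]
  · simp [Finset.sum_add_distrib, ← Finset.mul_sum, hf₃, hk.sum_eq_zero]

theorem IsCirculation.sum_eq_zero_left (hk : IsCirculation G k) (y : V) : ∑ x, k x y = 0 := by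
  simp [hk.antisymm _ y, hk.sum_eq_zero]

theorem IsCirculation.sum_potential_sub_mul (hk : IsCirculation G k) (φ : V → ℝ) :
    ∑ x, ∑ y, (φ y - φ x) * k x y = 0 := by
  simp only [sub_mul, Finset.sum_sub_distrib, ← Finset.mul_sum, hk.sum_eq_zero, mul_zero]
  rw [Finset.sum_comm]
  simp [← Finset.mul_sum, hk.sum_eq_zero_left]

theorem SimpleGraph.Walk.isCirculation_netDartCount {v : V} (c : G.Walk v v) :
    IsCirculation G c.netDartCount :=
  ⟨c.netDartCount_antisymm, fun _ _ => c.netDartCount_eq_zero_of_not_adj,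
    fun x => by simp [c.sum_netDartCount]⟩

variable (r : Sym2 V → ℝ)

def energyInner (f g : V → V → ℝ) : ℝ :=
  ∑ x, ∑ y, f x y * g x y * r s(x, y)

theorem energyInner_add_smul_self (f k : V → V → ℝ) (t : ℝ) :
    energyInner r (f + t • k) (f + t • k) =
      energyInner r f f + 2 * t * energyInner r f k + t ^ 2 * energyInner r k k := by
  simp only [energyInner, Finset.mul_sum, ← Finset.sum_add_distrib]
  refine Finset.sum_congr rfl fun x _ => Finset.sum_congr rfl fun y _ => ?_
  simp only [Pi.add_apply, Pi.smul_apply, smul_eq_mul]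
  ring

variable {r}

theorem energyInner_netDartCount (hf : ∀ x y, f x y = -f y x) {u v : V} (w : G.Walk u v) :
    energyInner r f w.netDartCount = 2 * w.voltage r f := by
  induction w with
  | nil => simp [energyInner]
  | cons h p ih =>
    rename_i a b _
    simp only [energyInner, Walk.netDartCount_cons, Walk.voltage_cons, mul_add, add_mul,
      Finset.sum_add_distrib] at ih ⊢
    simp only [mul_sub, sub_mul, mul_ite, ite_mul, mul_one, mul_zero, zero_mul,
      Finset.sum_sub_distrib, Prod.mk.injEq, ite_and, ih]
    simp [hf b a, Sym2.eq_swap]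
    ring

theorem cycleLaw_iff_forall_energyInner_eq_zero (hf : ∀ x y, f x y = -f y x) :
    CycleLaw G r f ↔ ∀ k, IsCirculation G k → energyInner r f k = 0 := by
  refine ⟨fun hcyc k hk => ?_, fun horth v c _ => ?_⟩
  · obtain ⟨φ, hφ⟩ := hcyc.exists_potential hf
    rw [← hk.sum_potential_sub_mul φ]
    refine Finset.sum_congr rfl fun x _ => Finset.sum_congr rfl fun y _ => ?_
    by_cases hxy : G.Adj x y
    · rw [← hφ x y hxy]; ring
    · simp [hk.eq_zero_of_not_adj x y hxy]
  · have := horth _ c.isCirculation_netDartCount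
    rw [energyInner_netDartCount hf] at this
    exact (mul_eq_zero.1 this).resolve_left two_ne_zero

variable (hr : ∀ e ∈ G.edgeSet, 0 < r e)
include hr

omit [Fintype V] in
theorem mul_self_mul_resistance_nonneg (hf₀ : ∀ x y, ¬G.Adj x y → f x y = 0) (x y : V) :
    0 ≤ f x y * f x y * r s(x, y) := by
  by_cases hxy : G.Adj x y
  · exact mul_nonneg (mul_self_nonneg _) (hr _ hxy).le
  · simp [hf₀ x y hxy]

theorem energyInner_self_nonneg (hf₀ : ∀ x y, ¬G.Adj x y → f x y = 0) :
    0 ≤ energyInner r f f :=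
  Finset.sum_nonneg fun x _ => Finset.sum_nonneg fun y _ =>
    mul_self_mul_resistance_nonneg hr hf₀ x y

theorem energy_eq_ofReal_energyInner (hf₀ : ∀ x y, ¬G.Adj x y → f x y = 0) :
    energy G r f = ENNReal.ofReal (energyInner r f f / 2) := by
  let term : V × V → ℝ≥0∞ := fun e =>
    ENNReal.ofReal (f e.1 e.2 * f e.1 e.2 * r s(e.1, e.2))
  have hsupp : Function.support term ⊆ {e | G.Adj e.1 e.2} := fun e he =>
    not_not.1 fun hxy => he (by simp [term, hf₀ _ _ hxy])
  rw [energy, ENNReal.ofReal_div_of_pos two_pos, ENNReal.ofReal_ofNat, energyInner,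
    ← Fintype.sum_prod_type', ENNReal.ofReal_sum_of_nonneg fun e _ =>
      mul_self_mul_resistance_nonneg hr hf₀ e.1 e.2,
    ← tsum_fintype (L := .unconditional _) term, ← tsum_subtype_eq_of_support_subset hsupp]
  simp only [term, sq]
  rfl

theorem energy_le_energy_iff (hf₀ : ∀ x y, ¬G.Adj x y → f x y = 0)
    (hg₀ : ∀ x y, ¬G.Adj x y → g x y = 0) :
    energy G r f ≤ energy G r g ↔ energyInner r f f ≤ energyInner r g g := by
  rw [energy_eq_ofReal_energyInner hr hf₀, energy_eq_ofReal_energyInner hr hg₀,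
    ENNReal.ofReal_le_ofReal_iff (by linarith [energyInner_self_nonneg hr hg₀])]
  exact div_le_div_iff_of_pos_right two_pos

theorem IsFlow.forall_energy_le_iff (hf : IsFlow G p q I f) :
    (∀ g, IsFlow G p q I g → energy G r f ≤ energy G r g) ↔
      ∀ k, IsCirculation G k → energyInner r f k = 0 := by
  have hf₀ := (isFlow_iff_sum_eq.1 hf).2.1
  refine ⟨fun hmin k hk => ?_, fun horth g hg => ?_⟩
  · -- the energy along the line `t ↦ f + t • k` is a quadratic in `t` minimal at `t = 0`
    have hquad : ∀ t : ℝ,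
        0 ≤ energyInner r k k * (t * t) + 2 * energyInner r f k * t + 0 := fun t => by
      have hle := (energy_le_energy_iff hr hf₀ (isFlow_iff_sum_eq.1 (hf.add_smul hk t)).2.1).1
        (hmin _ (hf.add_smul hk t))
      rw [energyInner_add_smul_self] at hle
      linarith
    have hdisc := discrim_le_zero hquad
    rw [discrim] at hdisc
    nlinarith
  · have hgk : g = f + (1 : ℝ) • (g - f) := by simp
    rw [energy_le_energy_iff hr hf₀ (isFlow_iff_sum_eq.1 hg).2.1, hgk, energyInner_add_smul_self,
      horth _ (hf.sub_isCirculation hg)]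
    nlinarith [energyInner_self_nonneg hr (hf.sub_isCirculation hg).eq_zero_of_not_adj]

end FiniteNetwork

theorem cycleLaw_iff_minimum_energy_general
    {V : Type} [Fintype V] (G : SimpleGraph V)
    (r : Sym2 V → ℝ) (hr : ∀ e ∈ G.edgeSet, 0 < r e)
    (p q : V) (I : ℝ)
    (f : V → V → ℝ) (hf : IsFlow G p q I f) :
    CycleLaw G r f ↔
      ∀ g : V → V → ℝ, IsFlow G p q I g → energy G r f ≤ energy G r g := by
  rw [cycleLaw_iff_forall_energyInner_eq_zero hf.1, hf.forall_energy_le_iff hr]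

/-- In a finite connected network, a flow of intensity `I` satisfies
Kirchhoff's cycle law if and only if it minimises the energy among all flows of
intensity `I`. -/
theorem cycleLaw_iff_minimum_energy
    {V : Type} [Fintype V] (G : SimpleGraph V) (hconn : G.Connected)
    (r : Sym2 V → ℝ) (hr : ∀ e ∈ G.edgeSet, 0 < r e)
    (p q : V) (hpq : p ≠ q) (I : ℝ)
    (f : V → V → ℝ) (hf : IsFlow G p q I f) :
    CycleLaw G r f ↔
      ∀ g : V → V → ℝ, IsFlow G p q I g → energy G r f ≤ energy G r g :=
  cycleLaw_iff_minimum_energy_general G r hr p q I f hf
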